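/- Let n ≥ 2. Define H_n : ℕ → ℕ by letting H_n(m) be the number of vectors b ∈ ℕ^{V(𝒢_n)} expressible as a sum of some multiset of m edge vectors ρ(e) of 𝒢_n (so H_n(0) = 1). Then in the ring of formal power series ℤ⟦t⟧, (Σ_{m ≥ 0} H_n(m) t^m) · (1 − t)^{2n+1} = (1 + t)^n − t. In other words, the h-polynomial of the edge ring k[𝒢_n] is h(k[𝒢_n]; t) = C(n,0) + (C(n,1) − 1)t + C(n,2)t² + ⋯ + C(n,n)t^n = (1+t)^n − t. -/

import Mathlib

/-- Edges of the graph `𝒢ₙ`: `(i,0) = xᵢ`, `(i,1) = yᵢ`, `(i,2) = zᵢ`. -/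
abbrev EdgeVar (n : ℕ) := Fin n × Fin 3

/-- Vertices of the graph `𝒢ₙ`: `none = w`, `some (i,0) = uᵢ⁽¹⁾`, `some (i,1) = uᵢ⁽²⁾`. -/
abbrev VertexVar (n : ℕ) := Option (Fin n × Fin 2)

/-- First endpoint of an edge: `xᵢ` and `yᵢ` contain `w`, `zᵢ` contains `uᵢ⁽¹⁾`. -/
def ep1 {n : ℕ} (e : EdgeVar n) : VertexVar n :=
  if e.2 = 2 then some (e.1, 0) else none

/-- Second endpoint of an edge: `xᵢ` contains `uᵢ⁽¹⁾`, while `yᵢ` and `zᵢ` contain `uᵢ⁽²⁾`. -/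
def ep2 {n : ℕ} (e : EdgeVar n) : VertexVar n :=
  if e.2 = 0 then some (e.1, 0) else some (e.1, 1)

/-- `ρ(e) = 𝐞_a + 𝐞_b ∈ ℕ^{V(𝒢ₙ)}` for an edge `e = {a, b}` of `𝒢ₙ`. -/
def rho {n : ℕ} (e : EdgeVar n) : VertexVar n → ℕ :=
  fun v => (if v = ep1 e then 1 else 0) + (if v = ep2 e then 1 else 0)

/-- The Hilbert function of the edge ring `k[𝒢ₙ]`: `Hfun n m` is the number of vectors
`b ∈ ℕ^{V(𝒢ₙ)}` expressible as a sum of a multiset of `m` edge vectors `ρ(e)`. -/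
noncomputable def Hfun (n : ℕ) (m : ℕ) : ℕ :=
  Set.ncard {b : VertexVar n → ℕ |
    ∃ M : Multiset (EdgeVar n), Multiset.card M = m ∧ b = (M.map rho).sum}

section EdgeRingAux

open Finset PowerSeries

def box2 (m : ℕ) : Finset (ℕ × ℕ) := Finset.range (m+1) ×ˢ Finset.range (m+1)

@[simp] lemma mem_box2 {m : ℕ} {a : ℕ × ℕ} : a ∈ box2 m ↔ a.1 ≤ m ∧ a.2 ≤ m := by
  simp only [box2, mem_product, mem_range]; omega

def fiberF (wt : ℕ × ℕ → ℕ) (l : ℕ) : Finset (ℕ × ℕ) := (box2 l).filter (fun a => wt a = l)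

def vecF (wt : ℕ × ℕ → ℕ) (n m : ℕ) : Finset (Fin n → ℕ × ℕ) :=
  (Fintype.piFinset (fun _ => box2 m)).filter (fun g => ∑ i, wt (g i) = m)

def cvecF (wt : ℕ × ℕ → ℕ) (n m : ℕ) : Finset (Fin n → ℕ × ℕ) :=
  (Fintype.piFinset (fun _ => box2 m)).filter (fun g => ∑ i, wt (g i) ≤ m)

def Pfin (n m : ℕ) : Finset (Fin n → ℕ × ℕ) :=
  (Fintype.piFinset (fun _ => box2 m)).filter
    (fun g => (∑ i, max (g i).1 (g i).2) ≤ m ∧ m ≤ ∑ i, ((g i).1 + (g i).2))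

lemma mem_Pfin {n m : ℕ} {g : Fin n → ℕ × ℕ} :
    g ∈ Pfin n m ↔ (∑ i, max (g i).1 (g i).2) ≤ m ∧ m ≤ ∑ i, ((g i).1 + (g i).2) := by
  simp only [Pfin, mem_filter, Fintype.mem_piFinset, mem_box2, and_iff_right_iff_imp]
  rintro ⟨h, -⟩ i
  have hle : max (g i).1 (g i).2 ≤ m :=
    le_trans (Finset.single_le_sum (f := fun j => max (g j).1 (g j).2)
      (fun j _ => Nat.zero_le _) (mem_univ i)) h
  omega


def Bfin (n m : ℕ) : Finset (Fin n → ℕ × ℕ) :=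
  (Fintype.piFinset (fun _ => box2 m)).filter (fun g => (∑ i, ((g i).1 + (g i).2)) < m)

lemma mem_Bfin {n m : ℕ} {g : Fin n → ℕ × ℕ} :
    g ∈ Bfin n m ↔ (∑ i, ((g i).1 + (g i).2)) < m := by
  simp only [Bfin, mem_filter, Fintype.mem_piFinset, mem_box2, and_iff_right_iff_imp]
  intro h i
  have hle : (g i).1 + (g i).2 ≤ ∑ j, ((g j).1 + (g j).2) :=
    Finset.single_le_sum (f := fun j => (g j).1 + (g j).2) (fun j _ => Nat.zero_le _) (mem_univ i)
  omega


lemma card_fiber_max (l : ℕ) : (fiberF (fun a => max a.1 a.2) l).card = 2 * l + 1 := by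
  have h : fiberF (fun a => max a.1 a.2) l = ({l} ×ˢ range (l+1)) ∪ (range l ×ˢ {l}) := by
    ext a
    simp only [fiberF, mem_filter, mem_box2, mem_union, mem_product, mem_singleton, mem_range]
    omega
  rw [h, card_union_of_disjoint, card_product, card_product, card_singleton, card_range, card_range]
  · ring
  · simp only [Finset.disjoint_left, mem_product, mem_singleton, mem_range]
    rintro a ⟨rfl, -⟩ ⟨h, -⟩
    omega

lemma card_fiber_sum (l : ℕ) : (fiberF (fun a => a.1 + a.2) l).card = l + 1 := by
  have h : fiberF (fun a => a.1 + a.2) l = Finset.HasAntidiagonal.antidiagonal l := by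
    ext a
    simp only [fiberF, mem_filter, mem_box2, Finset.HasAntidiagonal.mem_antidiagonal]
    omega
  rw [h, Finset.Nat.card_antidiagonal]

lemma mk_mul_one_sub_X (u : ℕ → ℤ) :
    (PowerSeries.mk u) * (1 - X) =
      PowerSeries.mk (fun m => u m - (match m with | 0 => 0 | k+1 => u k)) := by
  ext m
  rw [mul_sub, mul_one, map_sub, coeff_mk]
  cases m with
  | zero => rw [coeff_zero_mul_X, coeff_mk]
  | succ k => rw [coeff_succ_mul_X, coeff_mk, coeff_mk]

lemma Smax_identity :
    (PowerSeries.mk fun l => ((2 * l + 1 : ℕ) : ℤ)) * (1 - X) ^ 2 = 1 + X := by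
  rw [sq, ← mul_assoc, mk_mul_one_sub_X, mk_mul_one_sub_X]
  ext m
  rw [coeff_mk, map_add, coeff_one, coeff_X]
  rcases m with _ | _ | m <;> push_cast <;> simp <;> ring

lemma Ssum_identity :
    (PowerSeries.mk fun l => ((l + 1 : ℕ) : ℤ)) * (1 - X) ^ 2 = 1 := by
  rw [sq, ← mul_assoc, mk_mul_one_sub_X, mk_mul_one_sub_X]
  ext m
  rw [coeff_mk, coeff_one]
  rcases m with _ | _ | m <;> push_cast <;> simp

section WithHw

variable {wt : ℕ × ℕ → ℕ} (hw : ∀ a : ℕ × ℕ, a.1 ≤ wt a ∧ a.2 ≤ wt a)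
include hw

lemma mem_fiberF {l : ℕ} {a : ℕ × ℕ} : a ∈ fiberF wt l ↔ wt a = l := by
  simp only [fiberF, mem_filter, mem_box2, and_iff_right_iff_imp]
  intro h
  obtain ⟨h1, h2⟩ := hw a
  omega

lemma mem_vecF {n m : ℕ} {g : Fin n → ℕ × ℕ} : g ∈ vecF wt n m ↔ ∑ i, wt (g i) = m := by
  simp only [vecF, mem_filter, Fintype.mem_piFinset, mem_box2, and_iff_right_iff_imp]
  intro h i
  have hle : wt (g i) ≤ m :=
    h ▸ Finset.single_le_sum (f := fun j => wt (g j)) (fun j _ => Nat.zero_le _) (mem_univ i)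
  obtain ⟨h1, h2⟩ := hw (g i)
  omega

lemma vecF_succ (n m : ℕ) :
    vecF wt (n+1) m = (Finset.HasAntidiagonal.antidiagonal m).biUnion
      (fun kl => ((fiberF wt kl.1) ×ˢ (vecF wt n kl.2)).image (fun x => Fin.cons x.1 x.2)) := by
  ext g
  rw [mem_vecF hw]
  simp only [mem_biUnion, mem_image, mem_product, Finset.HasAntidiagonal.mem_antidiagonal]
  constructor
  · intro h
    exact ⟨(wt (g 0), ∑ i : Fin n, wt (g i.succ)), by rw [← h, Fin.sum_univ_succ],
      (g 0, Fin.tail g), ⟨(mem_fiberF hw).2 rfl, (mem_vecF hw).2 rfl⟩, Fin.cons_self_tail g⟩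
  · rintro ⟨kl, hkl, x, ⟨ha, hh⟩, rfl⟩
    rw [Fin.sum_univ_succ]
    simp only [Fin.cons_zero, Fin.cons_succ]
    rw [(mem_fiberF hw).1 ha, (mem_vecF hw).1 hh, hkl]

lemma card_vecF_succ (n m : ℕ) :
    (vecF wt (n+1) m).card =
      ∑ kl ∈ Finset.HasAntidiagonal.antidiagonal m, (fiberF wt kl.1).card * (vecF wt n kl.2).card := by
  rw [vecF_succ hw, Finset.card_biUnion]
  · refine Finset.sum_congr rfl fun kl _ => ?_
    rw [Finset.card_image_of_injective _ ?_, Finset.card_product]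
    intro x y hxy
    simp only at hxy
    have h0 : x.1 = y.1 := by
      have := congrFun hxy 0; simpa using this
    have h2 : x.2 = y.2 := by
      funext i; have := congrFun hxy i.succ; simpa using this
    exact Prod.ext h0 h2
  · rintro ⟨k, l⟩ hkl ⟨k', l'⟩ hkl' hne
    simp only [Finset.disjoint_left, mem_image, mem_product]
    rintro g ⟨x, ⟨ha, hh⟩, rfl⟩ ⟨x', ⟨ha', hh'⟩, heq⟩
    have h0 : x'.1 = x.1 := by
      have := congrFun heq 0; simpa using this
    have htail : x'.2 = x.2 := by
      funext i; have := congrFun heq i.succ; simpa using this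
    apply hne
    have e1 : k' = k := by
      rw [← (mem_fiberF hw).1 ha, ← (mem_fiberF hw).1 ha', h0]
    have e2 : l' = l := by
      rw [← (mem_vecF hw).1 hh, ← (mem_vecF hw).1 hh', htail]
    simp only [Prod.mk.injEq]
    exact ⟨e1.symm, e2.symm⟩

lemma gf_vecF (n : ℕ) :
    (PowerSeries.mk fun m => ((vecF wt n m).card : ℤ)) =
      (PowerSeries.mk fun l => ((fiberF wt l).card : ℤ)) ^ n := by
  induction n with
  | zero =>
    ext m
    rw [coeff_mk, pow_zero, coeff_one]
    rcases m with _ | m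
    · have : vecF wt 0 0 = {(fun i => i.elim0 : Fin 0 → ℕ × ℕ)} := by
        ext g
        rw [mem_vecF hw]
        simp [Subsingleton.elim g (fun i => i.elim0)]
      rw [this]; simp
    · have : vecF wt 0 (m+1) = ∅ := by
        ext g
        rw [mem_vecF hw]
        simp
      simp [this]
  | succ n ih =>
    ext m
    rw [coeff_mk, pow_succ', ← ih, coeff_mul, card_vecF_succ hw]
    push_cast
    exact Finset.sum_congr rfl fun kl _ => by rw [coeff_mk, coeff_mk]

lemma mem_cvecF {n m : ℕ} {g : Fin n → ℕ × ℕ} : g ∈ cvecF wt n m ↔ ∑ i, wt (g i) ≤ m := by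
  simp only [cvecF, mem_filter, Fintype.mem_piFinset, mem_box2, and_iff_right_iff_imp]
  intro h i
  have hle : wt (g i) ≤ m :=
    le_trans (Finset.single_le_sum (f := fun j => wt (g j)) (fun j _ => Nat.zero_le _)
      (mem_univ i)) h
  obtain ⟨h1, h2⟩ := hw (g i)
  omega

lemma gf_cvecF (n : ℕ) :
    (PowerSeries.mk fun m => ((cvecF wt n m).card : ℤ)) * (1 - X) =
      PowerSeries.mk fun m => ((vecF wt n m).card : ℤ) := by
  rw [mk_mul_one_sub_X]
  ext m
  rw [coeff_mk, coeff_mk]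
  cases m with
  | zero =>
    have : cvecF wt n 0 = vecF wt n 0 := by
      ext g; rw [mem_cvecF hw, mem_vecF hw]; omega
    rw [this]; ring
  | succ k =>
    have hsplit : cvecF wt n (k+1) = cvecF wt n k ∪ vecF wt n (k+1) := by
      ext g; rw [mem_cvecF hw, mem_union, mem_cvecF hw, mem_vecF hw]; omega
    have hdisj : Disjoint (cvecF wt n k) (vecF wt n (k+1)) := by
      simp only [Finset.disjoint_left]
      intro g h1 h2
      rw [mem_cvecF hw] at h1
      rw [mem_vecF hw] at h2
      omega
    rw [hsplit, card_union_of_disjoint hdisj]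
    push_cast
    ring

end WithHw

lemma card_cvec_max_split (n m : ℕ) :
    (cvecF (fun a => max a.1 a.2) n m).card = (Pfin n m).card + (Bfin n m).card := by
  have hw' : ∀ a : ℕ × ℕ, a.1 ≤ max a.1 a.2 ∧ a.2 ≤ max a.1 a.2 := fun a =>
    ⟨le_max_left _ _, le_max_right _ _⟩
  have hsplit : cvecF (fun a => max a.1 a.2) n m = Pfin n m ∪ Bfin n m := by
    ext g
    rw [mem_cvecF hw', mem_union, mem_Pfin, mem_Bfin]
    have : ∀ i, max (g i).1 (g i).2 ≤ (g i).1 + (g i).2 := fun i => by omega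
    have hs : (∑ i, max (g i).1 (g i).2) ≤ ∑ i, ((g i).1 + (g i).2) :=
      Finset.sum_le_sum fun i _ => this i
    omega
  have hdisj : Disjoint (Pfin n m) (Bfin n m) := by
    simp only [Finset.disjoint_left]
    intro g h1 h2
    rw [mem_Pfin] at h1
    rw [mem_Bfin] at h2
    omega
  rw [hsplit, card_union_of_disjoint hdisj]

lemma gf_Bfin (n : ℕ) :
    (PowerSeries.mk fun m => ((Bfin n m).card : ℤ)) =
      X * PowerSeries.mk fun m => ((cvecF (fun a => a.1 + a.2) n m).card : ℤ) := by
  have hw' : ∀ a : ℕ × ℕ, a.1 ≤ a.1 + a.2 ∧ a.2 ≤ a.1 + a.2 := fun a => ⟨by omega, by omega⟩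
  ext m
  cases m with
  | zero =>
    rw [coeff_mk, coeff_zero_X_mul]
    have : Bfin n 0 = ∅ := by
      ext g; rw [mem_Bfin]; simp
    rw [this]; simp
  | succ k =>
    rw [coeff_mk, coeff_succ_X_mul, coeff_mk]
    have : Bfin n (k+1) = cvecF (fun a => a.1 + a.2) n k := by
      ext g; rw [mem_Bfin, mem_cvecF hw']; omega
    rw [this]

-- basic multiset helpers
lemma msum_apply {n : ℕ} (M : Multiset (EdgeVar n)) (v : VertexVar n) :
    (M.map rho).sum v = (M.map (fun e => rho e v)).sum := by
  induction M using Multiset.induction with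
  | empty => simp
  | cons a s ih => simp [ih]

lemma sum_indicator {α : Type*} [DecidableEq α] (M : Multiset α) (x : α) :
    (M.map (fun e => if e = x then 1 else 0)).sum = M.count x := by
  induction M using Multiset.induction with
  | empty => simp
  | cons a s ih =>
    rw [Multiset.map_cons, Multiset.sum_cons, ih, Multiset.count_cons]
    by_cases h : a = x
    · simp [h, Nat.add_comm]
    · simp [h]
      exact fun hx => h hx.symm

lemma msum_swap {α ι : Type*} (M : Multiset α) (s : Finset ι) (f : ι → α → ℕ) :
    (M.map (fun e => ∑ i ∈ s, f i e)).sum = ∑ i ∈ s, (M.map (f i)).sum := by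
  induction M using Multiset.induction with
  | empty => simp
  | cons a t ih => simp [ih, Finset.sum_add_distrib]

-- rho evaluations
lemma rho_some0 {n : ℕ} (e : EdgeVar n) (i : Fin n) :
    rho e (some (i, 0)) = (if e = (i, 0) then 1 else 0) + (if e = (i, 2) then 1 else 0) := by
  obtain ⟨j, t⟩ := e
  fin_cases t <;> simp [rho, ep1, ep2, Prod.ext_iff] <;>
    · by_cases h : i = j <;> simp [h, eq_comm]

lemma rho_some1 {n : ℕ} (e : EdgeVar n) (i : Fin n) :
    rho e (some (i, 1)) = (if e = (i, 1) then 1 else 0) + (if e = (i, 2) then 1 else 0) := by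
  obtain ⟨j, t⟩ := e
  fin_cases t <;> simp [rho, ep1, ep2, Prod.ext_iff] <;>
    · by_cases h : i = j <;> simp [h, eq_comm]

lemma rho_none {n : ℕ} (e : EdgeVar n) :
    rho e none = (if e.2 = 2 then 0 else 1) := by
  obtain ⟨j, t⟩ := e
  fin_cases t <;> simp [rho, ep1, ep2]

def Phi (n m : ℕ) (g : Fin n → ℕ × ℕ) : VertexVar n → ℕ
  | none => 2*m - ∑ i, ((g i).1 + (g i).2)
  | some iu => if iu.2 = 0 then (g iu.1).1 else (g iu.1).2

lemma Phi_inj (n m : ℕ) : Function.Injective (Phi n m) := by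
  intro g g' h
  funext i
  have h1 := congrFun h (some (i, 0))
  have h2 := congrFun h (some (i, 1))
  simp only [Phi] at h1 h2
  norm_num at h1 h2
  exact Prod.ext h1 h2

-- evaluation of the multiset sum at vertices
lemma eval_some0 {n : ℕ} (M : Multiset (EdgeVar n)) (i : Fin n) :
    (M.map rho).sum (some (i, 0)) = M.count (i, 0) + M.count (i, 2) := by
  rw [msum_apply]
  have : (M.map fun e => rho e (some (i, 0))) =
      M.map fun e => (if e = ((i, 0) : EdgeVar n) then 1 else 0) +
        (if e = ((i, 2) : EdgeVar n) then 1 else 0) :=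
    Multiset.map_congr rfl fun e _ => rho_some0 e i
  rw [this, Multiset.sum_map_add, sum_indicator, sum_indicator]

lemma eval_some1 {n : ℕ} (M : Multiset (EdgeVar n)) (i : Fin n) :
    (M.map rho).sum (some (i, 1)) = M.count (i, 1) + M.count (i, 2) := by
  rw [msum_apply]
  have : (M.map fun e => rho e (some (i, 1))) =
      M.map fun e => (if e = ((i, 1) : EdgeVar n) then 1 else 0) +
        (if e = ((i, 2) : EdgeVar n) then 1 else 0) :=
    Multiset.map_congr rfl fun e _ => rho_some1 e i
  rw [this, Multiset.sum_map_add, sum_indicator, sum_indicator]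

lemma eval_none {n : ℕ} (M : Multiset (EdgeVar n)) :
    (M.map rho).sum none + ∑ i : Fin n, M.count (i, 2) = Multiset.card M := by
  have key : ∀ e : EdgeVar n,
      rho e none + (∑ i : Fin n, if e = ((i, 2) : EdgeVar n) then 1 else 0) = 1 := by
    rintro ⟨j, t⟩
    rw [rho_none]
    fin_cases t
    · simp [Prod.ext_iff]
    · simp [Prod.ext_iff]
    · simp [Prod.ext_iff, Finset.sum_ite_eq]
  have h2 : (M.map fun e => rho e none +
      (∑ i : Fin n, if e = ((i, 2) : EdgeVar n) then 1 else 0)).sum = Multiset.card M := by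
    rw [Multiset.map_congr rfl fun e _ => key e]
    simp
  rw [Multiset.sum_map_add, msum_swap] at h2
  rw [msum_apply]
  rw [← h2]
  congr 1
  exact Finset.sum_congr rfl fun i _ => (sum_indicator M (i, 2)).symm

lemma card_count {n : ℕ} (M : Multiset (EdgeVar n)) :
    Multiset.card M = ∑ i : Fin n, (M.count (i, 0) + M.count (i, 1) + M.count (i, 2)) := by
  rw [← Multiset.sum_count_eq_card (s := (Finset.univ : Finset (EdgeVar n))) (fun a _ => mem_univ a)]
  rw [Fintype.sum_prod_type]
  refine Finset.sum_congr rfl fun i _ => ?_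
  rw [Fin.sum_univ_three]

lemma forward {n m : ℕ} (M : Multiset (EdgeVar n)) (hM : Multiset.card M = m) :
    ∃ g ∈ Pfin n m, Phi n m g = (M.map rho).sum := by
  set a : Fin n → ℕ := fun i => M.count (i, 0) with ha
  set b : Fin n → ℕ := fun i => M.count (i, 1) with hb
  set c : Fin n → ℕ := fun i => M.count (i, 2) with hc
  refine ⟨fun i => (a i + c i, b i + c i), ?_, ?_⟩
  · rw [mem_Pfin]
    have hm : m = ∑ i, (a i + b i + c i) := hM ▸ card_count M
    constructor
    · rw [hm]
      exact Finset.sum_le_sum fun i _ => by simp only; omega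
    · rw [hm]
      exact Finset.sum_le_sum fun i _ => by simp only; omega
  · funext v
    match v with
    | some (i, j) =>
      fin_cases j
      · exact (eval_some0 M i).symm
      · exact (eval_some1 M i).symm
    | none =>
      show 2*m - ∑ i, ((a i + c i) + (b i + c i)) = _
      have hm : m = ∑ i, (a i + b i + c i) := hM ▸ card_count M
      have h1 : (M.map rho).sum none + ∑ i, c i = m := by rw [← hM]; exact eval_none M
      have h2 : ∑ i, ((a i + c i) + (b i + c i)) = ∑ i, (a i + b i + c i) + ∑ i, c i := by
        rw [← Finset.sum_add_distrib]
        exact Finset.sum_congr rfl fun i _ => by omega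
      omega

lemma exists_le_sum : ∀ (n : ℕ) (Mb : Fin n → ℕ) (K : ℕ), K ≤ ∑ i, Mb i →
    ∃ c : Fin n → ℕ, (∀ i, c i ≤ Mb i) ∧ ∑ i, c i = K := by
  intro n
  induction n with
  | zero =>
    intro Mb K hK
    simp at hK
    exact ⟨fun i => 0, fun i => i.elim0, by simp [hK]⟩
  | succ n ih =>
    intro Mb K hK
    rw [Fin.sum_univ_succ] at hK
    set c0 := min K (Mb 0) with hc0
    obtain ⟨ct, hct, hctsum⟩ := ih (fun i => Mb i.succ) (K - c0)
      (show K - c0 ≤ ∑ i : Fin n, Mb i.succ by omega)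
    refine ⟨Fin.cons c0 ct, ?_, ?_⟩
    · intro i
      refine Fin.cases ?_ ?_ i
      · simp only [Fin.cons_zero]
        exact min_le_right _ _
      · intro j
        simpa using hct j
    · rw [Fin.sum_univ_succ]
      simp only [Fin.cons_zero, Fin.cons_succ]
      rw [hctsum]
      omega

lemma msum_finsum {α : Type*} {ι : Type*} (s : Finset ι) (F : ι → Multiset α) (f : α → ℕ) :
    ((∑ i ∈ s, F i).map f).sum = ∑ i ∈ s, ((F i).map f).sum := by
  induction s using Finset.cons_induction with
  | empty => simp
  | cons i s hi ih => simp [ih]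

lemma card_finsum {α : Type*} {ι : Type*} (s : Finset ι) (F : ι → Multiset α) :
    Multiset.card (∑ i ∈ s, F i) = ∑ i ∈ s, Multiset.card (F i) := by
  induction s using Finset.cons_induction with
  | empty => simp
  | cons i s hi ih => simp [ih]

lemma backward {n m : ℕ} (g : Fin n → ℕ × ℕ) (hg : g ∈ Pfin n m) :
    ∃ M : Multiset (EdgeVar n), Multiset.card M = m ∧ Phi n m g = (M.map rho).sum := by
  rw [mem_Pfin] at hg
  obtain ⟨hmax, hsum⟩ := hg
  -- sum facts
  have hminmax : ∑ i, (min (g i).1 (g i).2 + max (g i).1 (g i).2) = ∑ i, ((g i).1 + (g i).2) :=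
    Finset.sum_congr rfl fun i _ => by omega
  have hsplit : ∑ i, (min (g i).1 (g i).2 + max (g i).1 (g i).2) =
      ∑ i, min (g i).1 (g i).2 + ∑ i, max (g i).1 (g i).2 := Finset.sum_add_distrib
  obtain ⟨c, hc, hcsum⟩ := exists_le_sum n (fun i => min (g i).1 (g i).2)
      ((∑ i, ((g i).1 + (g i).2)) - m)
      (show _ ≤ ∑ i : Fin n, min (g i).1 (g i).2 by omega)
  set A : Fin n → ℕ := fun i => (g i).1 - c i with hA
  set B : Fin n → ℕ := fun i => (g i).2 - c i with hB
  set M : Multiset (EdgeVar n) := ∑ i : Fin n,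
      (Multiset.replicate (A i) ((i, 0) : EdgeVar n) +
       Multiset.replicate (B i) ((i, 1) : EdgeVar n) +
       Multiset.replicate (c i) ((i, 2) : EdgeVar n)) with hM
  have evalM : ∀ v : VertexVar n, (M.map rho).sum v =
      ∑ i, (A i * rho (i, 0) v + B i * rho (i, 1) v + c i * rho (i, 2) v) := by
    intro v
    rw [msum_apply, hM, msum_finsum]
    refine Finset.sum_congr rfl fun i _ => ?_
    simp [Multiset.map_replicate, Multiset.sum_replicate, mul_comm]
  have hABc : ∑ i, (A i + B i + c i) + (∑ i, ((g i).1 + (g i).2) - m) =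
      ∑ i, ((g i).1 + (g i).2) := by
    rw [← hcsum, ← Finset.sum_add_distrib]
    exact Finset.sum_congr rfl fun i _ => by have := hc i; simp only [hA, hB]; omega
  have cardM : Multiset.card M = m := by
    rw [hM, card_finsum]
    have : ∀ i ∈ Finset.univ, Multiset.card
        (Multiset.replicate (A i) ((i, 0) : EdgeVar n) +
         Multiset.replicate (B i) ((i, 1) : EdgeVar n) +
         Multiset.replicate (c i) ((i, 2) : EdgeVar n)) = A i + B i + c i := by
      intro i _
      simp [Multiset.card_replicate]
    rw [Finset.sum_congr rfl this]
    omega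
  refine ⟨M, cardM, ?_⟩
  funext v
  match v with
  | some (i0, j) =>
    have r00 : ∀ i : Fin n, rho (i, 0) (some (i0, (0 : Fin 2))) = if i = i0 then 1 else 0 := by
      intro i
      rw [rho_some0]
      simp [Prod.ext_iff]
    have r10 : ∀ i : Fin n, rho (i, 1) (some (i0, (0 : Fin 2))) = 0 := by
      intro i
      rw [rho_some0]
      simp [Prod.ext_iff]
    have r20 : ∀ i : Fin n, rho (i, 2) (some (i0, (0 : Fin 2))) = if i = i0 then 1 else 0 := by
      intro i
      rw [rho_some0]
      simp [Prod.ext_iff]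
    have r01 : ∀ i : Fin n, rho (i, 0) (some (i0, (1 : Fin 2))) = 0 := by
      intro i
      rw [rho_some1]
      simp [Prod.ext_iff]
    have r11 : ∀ i : Fin n, rho (i, 1) (some (i0, (1 : Fin 2))) = if i = i0 then 1 else 0 := by
      intro i
      rw [rho_some1]
      simp [Prod.ext_iff]
    have r21 : ∀ i : Fin n, rho (i, 2) (some (i0, (1 : Fin 2))) = if i = i0 then 1 else 0 := by
      intro i
      rw [rho_some1]
      simp [Prod.ext_iff]
    have key0 : (M.map rho).sum (some (i0, (0 : Fin 2))) = (g i0).1 := by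
      rw [evalM]
      have : ∀ i ∈ Finset.univ, A i * rho (i, 0) (some (i0, (0:Fin 2))) +
          B i * rho (i, 1) (some (i0, (0:Fin 2))) + c i * rho (i, 2) (some (i0, (0:Fin 2))) =
          if i = i0 then A i + c i else 0 := by
        intro i _
        rw [r00, r10, r20]
        by_cases h : i = i0 <;> simp [h]
      rw [Finset.sum_congr rfl this, Finset.sum_ite_eq' Finset.univ i0 (fun i => A i + c i)]
      have := hc i0
      simp only [hA, if_pos (mem_univ i0)]
      omega
    have key1 : (M.map rho).sum (some (i0, (1 : Fin 2))) = (g i0).2 := by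
      rw [evalM]
      have : ∀ i ∈ Finset.univ, A i * rho (i, 0) (some (i0, (1:Fin 2))) +
          B i * rho (i, 1) (some (i0, (1:Fin 2))) + c i * rho (i, 2) (some (i0, (1:Fin 2))) =
          if i = i0 then B i + c i else 0 := by
        intro i _
        rw [r01, r11, r21]
        by_cases h : i = i0 <;> simp [h]
      rw [Finset.sum_congr rfl this, Finset.sum_ite_eq' Finset.univ i0 (fun i => B i + c i)]
      have := hc i0
      simp only [hB, if_pos (mem_univ i0)]
      omega
    fin_cases j
    · exact key0.symm
    · exact key1.symm
  | none =>
    rw [evalM]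
    show 2*m - ∑ i, ((g i).1 + (g i).2) = _
    have rn0 : ∀ i : Fin n, rho (i, 0) (none : VertexVar n) = 1 := fun i => by
      rw [rho_none]; simp
    have rn1 : ∀ i : Fin n, rho (i, 1) (none : VertexVar n) = 1 := fun i => by
      rw [rho_none]; simp
    have rn2 : ∀ i : Fin n, rho (i, 2) (none : VertexVar n) = 0 := fun i => by
      rw [rho_none]; simp
    have : ∀ i ∈ Finset.univ, A i * rho (i, 0) (none : VertexVar n) +
        B i * rho (i, 1) (none : VertexVar n) + c i * rho (i, 2) (none : VertexVar n) =
        A i + B i := by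
      intro i _
      rw [rn0, rn1, rn2]
      ring
    rw [Finset.sum_congr rfl this]
    -- key arithmetic
    have hAB2c : ∑ i, (A i + B i) + 2 * ∑ i, c i = ∑ i, ((g i).1 + (g i).2) := by
      have e1 : ∑ i, ((A i + B i) + 2 * c i) = ∑ i, ((g i).1 + (g i).2) :=
        Finset.sum_congr rfl fun i _ => by have := hc i; simp only [hA, hB]; omega
      have e2 : ∑ i, ((A i + B i) + 2 * c i) = ∑ i, (A i + B i) + ∑ i, 2 * c i :=
        Finset.sum_add_distrib
      have e3 : ∑ i, 2 * c i = 2 * ∑ i, c i := by rw [Finset.mul_sum]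
      omega
    have hminlemax : ∑ i, min (g i).1 (g i).2 ≤ ∑ i, max (g i).1 (g i).2 :=
      Finset.sum_le_sum fun i _ => by omega
    omega


lemma Hfun_eq_card (n m : ℕ) : Hfun n m = (Pfin n m).card := by
  have hset : {b : VertexVar n → ℕ |
      ∃ M : Multiset (EdgeVar n), Multiset.card M = m ∧ b = (M.map rho).sum} =
      Phi n m '' ↑(Pfin n m) := by
    ext b
    constructor
    · rintro ⟨M, hM, rfl⟩
      obtain ⟨g, hg, hPhi⟩ := forward M hM
      exact ⟨g, hg, hPhi⟩
    · rintro ⟨g, hg, rfl⟩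
      obtain ⟨M, hM, hPhi⟩ := backward g (by simpa using hg)
      exact ⟨M, hM, hPhi⟩
  rw [Hfun, hset, Set.ncard_image_of_injective _ (Phi_inj n m), Set.ncard_coe_finset]

end EdgeRingAux

open PowerSeries in
/-- The Hilbert series identity `(Σ_m H(m) tᵐ)·(1−t)^{2n+1} = (1+t)ⁿ − t`, i.e. the
`h`-polynomial of `k[𝒢ₙ]` is `C(n,0) + (C(n,1)−1)t + C(n,2)t² + ⋯ + C(n,n)tⁿ = (1+t)ⁿ − t`. -/
theorem stmt_10 (n : ℕ) (hn : 2 ≤ n) :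
    (PowerSeries.mk fun m => (Hfun n m : ℤ)) * (1 - (X : ℤ⟦X⟧)) ^ (2 * n + 1) =
      (1 + (X : ℤ⟦X⟧)) ^ n - X := by
  have hwmax : ∀ a : ℕ × ℕ, a.1 ≤ max a.1 a.2 ∧ a.2 ≤ max a.1 a.2 := fun a =>
    ⟨le_max_left _ _, le_max_right _ _⟩
  have hwsum : ∀ a : ℕ × ℕ, a.1 ≤ a.1 + a.2 ∧ a.2 ≤ a.1 + a.2 := fun a =>
    ⟨Nat.le_add_right _ _, Nat.le_add_left _ _⟩
  have hHfun : (PowerSeries.mk fun m => ((Hfun n m : ℤ))) =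
      (PowerSeries.mk fun m => (((cvecF (fun a => max a.1 a.2) n m).card : ℤ))) -
        (PowerSeries.mk fun m => (((Bfin n m).card : ℤ))) := by
    ext m
    rw [map_sub, PowerSeries.coeff_mk, PowerSeries.coeff_mk, PowerSeries.coeff_mk,
      Hfun_eq_card, card_cvec_max_split n m]
    push_cast
    ring
  have hpow : (1 - (X : ℤ⟦X⟧)) ^ (2 * n + 1) = (1 - X) * ((1 - X) ^ 2) ^ n := by
    rw [← pow_mul, pow_succ']
  have cfm : (PowerSeries.mk fun l => (((fiberF (fun a => max a.1 a.2) l).card : ℤ))) =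
      PowerSeries.mk fun l => ((2 * l + 1 : ℕ) : ℤ) := by
    ext l
    rw [PowerSeries.coeff_mk, PowerSeries.coeff_mk, card_fiber_max]
  have cfs : (PowerSeries.mk fun l => (((fiberF (fun a => a.1 + a.2) l).card : ℤ))) =
      PowerSeries.mk fun l => ((l + 1 : ℕ) : ℤ) := by
    ext l
    rw [PowerSeries.coeff_mk, PowerSeries.coeff_mk, card_fiber_sum]
  rw [hHfun, hpow]
  have step : ((PowerSeries.mk fun m => (((cvecF (fun a => max a.1 a.2) n m).card : ℤ))) -
      (PowerSeries.mk fun m => (((Bfin n m).card : ℤ)))) * ((1 - X) * ((1 - X) ^ 2) ^ n) =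
      ((PowerSeries.mk fun m => (((cvecF (fun a => max a.1 a.2) n m).card : ℤ))) * (1 - X)) *
        ((1 - X) ^ 2) ^ n -
      ((PowerSeries.mk fun m => (((Bfin n m).card : ℤ))) * (1 - X)) * ((1 - X) ^ 2) ^ n := by
    ring
  rw [step, gf_cvecF hwmax n, gf_Bfin n, mul_assoc X _ (1 - X), gf_cvecF hwsum n,
    gf_vecF hwmax n, gf_vecF hwsum n, cfm, cfs, ← mul_pow, mul_assoc X _ (((1 - X) ^ 2) ^ n), ← mul_pow, Smax_identity,
    Ssum_identity, one_pow, mul_one]
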